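/- arXiv:2001.11168 — 2 statements merged into one kernel-verified Lean document; each statement's English description precedes it below -/
import Mathlib

section
/- Finite termination of Epanechnikov IRLS: with the setup of the Epanechnikov IRLS, if (O(θ_t)) is non-decreasing and takes finitely many values, then there exists τ such that O(θ_t) = O(θ_τ) for all t ≥ τ; and if additionally Σ_{i∈I_τ} x_i x_iᵀ is positive definite, then the identity O_M(θ_{τ+1}|θ_τ) - O_M(θ_τ|θ_τ) = (c_h/(n h^2)) (θ_{τ+1}-θ_τ)ᵀ (Σ_{i∈I_τ} x_i x_iᵀ)(θ_{τ+1}-θ_τ), together with O(θ_{τ+1}) - O(θ_τ) ≥ O_M(θ_{τ+1}|θ_τ) - O_M(θ_τ|θ_τ) ≥ 0 and O(θ_{τ+1}) = O(θ_τ), implies θ_{τ+1} = θ_τ. -/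
open Matrix BigOperators

/-! The objective values form a monotone sequence with finitely many values, so they are
constant from the index `τ` of their maximum on. The iterate `θ_{τ+1}` minimises the least-squares
sum over `I(θ_τ)`, so by the normal equations the minoriser gain
`O_M(θ_{τ+1}|θ_τ) - O_M(θ_τ|θ_τ)` is the Gram quadratic form in `θ_{τ+1} - θ_τ`. Since the
Epanechnikov objective dominates its minoriser, that gain is at most
`O(θ_{τ+1}) - O(θ_τ) = 0`, and positive definiteness forces `θ_{τ+1} = θ_τ`. -/

theorem Monotone.exists_forall_ge_eq_of_finite_range {ι α : Type*} [Preorder ι] [Nonempty ι]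
    [PartialOrder α] {f : ι → α} (hf : Monotone f) (hfin : (Set.range f).Finite) :
    ∃ τ, ∀ t, τ ≤ t → f t = f τ := by
  obtain ⟨_, ⟨τ, rfl⟩, hmax⟩ := hfin.exists_maximal (Set.range_nonempty f)
  exact ⟨τ, fun t ht => le_antisymm (hmax ⟨t, rfl⟩ (hf ht)) (hf ht)⟩

theorem Finset.sum_le_sum_filter_nonneg {ι M : Type*} [Fintype ι] [AddCommMonoid M]
    [LinearOrder M] [IsOrderedAddMonoid M] (f : ι → M) (s : Finset ι) :
    ∑ i ∈ s, f i ≤ ∑ i with 0 ≤ f i, f i := by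
  rw [Finset.sum_filter]
  calc ∑ i ∈ s, f i ≤ ∑ i ∈ s, if 0 ≤ f i then f i else 0 :=
        Finset.sum_le_sum fun i _ => by
          split_ifs with hi <;> [exact le_rfl; exact (not_le.1 hi).le]
    _ ≤ ∑ i, if 0 ≤ f i then f i else 0 :=
        Finset.sum_le_sum_of_subset_of_nonneg (Finset.subset_univ s) fun i _ _ => by
          split_ifs with hi <;> [exact hi; exact le_rfl]

section LeastSquares

variable {ι n K : Type*} [Fintype n]

section CommRing

variable [CommRing K] (s : Finset ι) (x : ι → n → K) (y : ι → K)

theorem dotProduct_sum_vecMulVec_mulVec (v : n → K) :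
    v ⬝ᵥ (∑ i ∈ s, vecMulVec (x i) (x i)) *ᵥ v = ∑ i ∈ s, (v ⬝ᵥ x i) ^ 2 := by
  simp only [sum_mulVec, dotProduct_sum, vecMulVec_mulVec, op_smul_eq_smul, dotProduct_smul,
    smul_eq_mul, dotProduct_comm (x _) v, sq]

theorem sum_sq_sub_dotProduct_sub (θ d : n → K) :
    ∑ i ∈ s, (y i - (θ - d) ⬝ᵥ x i) ^ 2 = ∑ i ∈ s, (y i - θ ⬝ᵥ x i) ^ 2
      + 2 * ∑ i ∈ s, (y i - θ ⬝ᵥ x i) * (d ⬝ᵥ x i) + ∑ i ∈ s, (d ⬝ᵥ x i) ^ 2 := by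
  simp only [sub_dotProduct, Finset.mul_sum, ← Finset.sum_add_distrib]
  exact Finset.sum_congr rfl fun i _ => by ring

end CommRing

variable [Field K] [LinearOrder K] [IsStrictOrderedRing K] {s : Finset ι} {x : ι → n → K}
  {y : ι → K}

/-- The normal equations: `ε ↦ F(q - ε • d) - F(q) = ε² A + 2 ε B` is nonnegative, so its
discriminant `4 B²` is nonpositive. -/
theorem sum_residual_mul_dotProduct_eq_zero {q : n → K}
    (hq : ∀ θ, ∑ i ∈ s, (y i - q ⬝ᵥ x i) ^ 2 ≤ ∑ i ∈ s, (y i - θ ⬝ᵥ x i) ^ 2) (d : n → K) :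
    ∑ i ∈ s, (y i - q ⬝ᵥ x i) * (d ⬝ᵥ x i) = 0 := by
  set B := ∑ i ∈ s, (y i - q ⬝ᵥ x i) * (d ⬝ᵥ x i)
  have hdiscr : discrim (∑ i ∈ s, (d ⬝ᵥ x i) ^ 2) (2 * B) 0 ≤ 0 := by
    refine discrim_le_zero fun ε => ?_
    have := hq (q - ε • d)
    simp only [sum_sq_sub_dotProduct_sub, smul_dotProduct, smul_eq_mul, mul_pow,
      mul_left_comm _ ε, ← Finset.mul_sum] at this
    linarith
  rw [discrim] at hdiscr
  exact pow_eq_zero_iff (n := 2) two_ne_zero |>.1 (by nlinarith [sq_nonneg B])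

theorem sum_sq_sub_dotProduct_eq_of_forall_le {q : n → K}
    (hq : ∀ θ, ∑ i ∈ s, (y i - q ⬝ᵥ x i) ^ 2 ≤ ∑ i ∈ s, (y i - θ ⬝ᵥ x i) ^ 2) (g : n → K) :
    ∑ i ∈ s, (y i - g ⬝ᵥ x i) ^ 2
      = ∑ i ∈ s, (y i - q ⬝ᵥ x i) ^ 2 + ∑ i ∈ s, ((q - g) ⬝ᵥ x i) ^ 2 := by
  have := sum_sq_sub_dotProduct_sub s x y q (q - g)
  rwa [sub_sub_cancel, sum_residual_mul_dotProduct_eq_zero hq, mul_zero, add_zero] at this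

end LeastSquares

/-- Written as `c/n ∑_{i ∈ s} (1 - r_i²/h²)`, the right side sums exactly the nonnegative
terms. -/
theorem epanechnikov_objective_le_filter_abs_le {ι : Type*} [Fintype ι] {c h : ℝ} (n : ℝ)
    (hc : 0 ≤ c / n) (hh : 0 < h) (r : ι → ℝ) (s : Finset ι) :
    c * s.card / n - c / (n * h ^ 2) * ∑ i ∈ s, r i ^ 2
      ≤ c * (Finset.univ.filter fun i => |r i| ≤ h).card / n
        - c / (n * h ^ 2) * ∑ i ∈ Finset.univ.filter (fun i => |r i| ≤ h), r i ^ 2 := by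
  have hform : ∀ t : Finset ι, c * t.card / n - c / (n * h ^ 2) * ∑ i ∈ t, r i ^ 2
      = c / n * ∑ i ∈ t, (1 - r i ^ 2 / h ^ 2) := fun t => by
    rw [Finset.sum_sub_distrib, Finset.sum_const, nsmul_eq_mul, mul_one, ← Finset.sum_div]
    ring
  have hfilter : (Finset.univ.filter fun i => |r i| ≤ h)
      = Finset.univ.filter fun i => 0 ≤ 1 - r i ^ 2 / h ^ 2 :=
    Finset.filter_congr fun i _ => by
      rw [sub_nonneg, div_le_one (by positivity), sq_le_sq, abs_of_pos hh]
  rw [hform, hform, hfilter]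
  exact mul_le_mul_of_nonneg_left (Finset.sum_le_sum_filter_nonneg _ s) hc

/-- Finite termination of Epanechnikov IRLS: if the objective sequence `(O(θ_t))` is
non-decreasing and takes finitely many values, then there exists `τ` with
`O(θ_t) = O(θ_τ)` for all `t ≥ τ`; and if moreover `Σ_{i∈I_τ} x_i x_iᵀ` is positive
definite, then the quadratic identity for the minorizer gap, together with
`O(θ_{τ+1}) - O(θ_τ) ≥ O_M(θ_{τ+1}|θ_τ) - O_M(θ_τ|θ_τ) ≥ 0` and
`O(θ_{τ+1}) = O(θ_τ)`, implies `θ_{τ+1} = θ_τ`. -/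
theorem epanechnikov_irls_finite_termination (p n : ℕ) (hn : 0 < n)
    (x : Fin n → Fin p → ℝ) (y : Fin n → ℝ) (h : ℝ) (hh : 0 < h)
    (I : (Fin p → ℝ) → Finset (Fin n))
    (hI : ∀ θv : Fin p → ℝ, I θv = Finset.univ.filter (fun i => |y i - θv ⬝ᵥ x i| ≤ h))
    (O : (Fin p → ℝ) → ℝ)
    (hO : ∀ θv : Fin p → ℝ, O θv = (3 / (4 * h)) * (I θv).card / n
      - (3 / (4 * h)) / (n * h ^ 2) * ∑ i ∈ I θv, (y i - θv ⬝ᵥ x i) ^ 2)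
    (OM : (Fin p → ℝ) → (Fin p → ℝ) → ℝ)
    (hOM : ∀ θv θ' : Fin p → ℝ, OM θv θ' = (3 / (4 * h)) * (I θ').card / n
      - (3 / (4 * h)) / (n * h ^ 2) * ∑ i ∈ I θ', (y i - θv ⬝ᵥ x i) ^ 2)
    (θ : ℕ → Fin p → ℝ)
    (hmax : ∀ t : ℕ, ∀ θ' : Fin p → ℝ, OM θ' (θ t) ≤ OM (θ (t + 1)) (θ t))
    (hmono : Monotone fun t : ℕ => O (θ t))
    (hfin : (Set.range fun t : ℕ => O (θ t)).Finite) :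
    ∃ τ : ℕ, (∀ t : ℕ, τ ≤ t → O (θ t) = O (θ τ)) ∧
      ((∑ i ∈ I (θ τ), Matrix.vecMulVec (x i) (x i)).PosDef →
        (OM (θ (τ + 1)) (θ τ) - OM (θ τ) (θ τ)
          = (3 / (4 * h)) / (n * h ^ 2) * ((θ (τ + 1) - θ τ) ⬝ᵥ
            (∑ i ∈ I (θ τ), Matrix.vecMulVec (x i) (x i)).mulVec (θ (τ + 1) - θ τ))) ∧
        θ (τ + 1) = θ τ) := by
  obtain ⟨τ, hτ⟩ := hmono.exists_forall_ge_eq_of_finite_range hfin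
  refine ⟨τ, hτ, fun hpd => ?_⟩
  set g := θ τ
  set q := θ (τ + 1)
  have hn' : (0 : ℝ) < n := Nat.cast_pos.2 hn
  have hc : 0 < 3 / (4 * h) / (n * h ^ 2) := by positivity
  have hq : ∀ θ', ∑ i ∈ I g, (y i - q ⬝ᵥ x i) ^ 2 ≤ ∑ i ∈ I g, (y i - θ' ⬝ᵥ x i) ^ 2 :=
    fun θ' => le_of_mul_le_mul_left (by linarith [hmax τ θ', hOM θ' g, hOM q g]) hc
  have hgap : OM q g - OM g g = 3 / (4 * h) / (n * h ^ 2) *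
      ((q - g) ⬝ᵥ (∑ i ∈ I g, vecMulVec (x i) (x i)) *ᵥ (q - g)) := by
    rw [dotProduct_sum_vecMulVec_mulVec, hOM, hOM, sum_sq_sub_dotProduct_eq_of_forall_le hq g]
    ring
  refine ⟨hgap, ?_⟩
  have hminor : OM q g ≤ O q := by
    rw [hOM, hO, hI q]
    exact epanechnikov_objective_le_filter_abs_le _ (by positivity) hh _ _
  have hquad : (q - g) ⬝ᵥ (∑ i ∈ I g, vecMulVec (x i) (x i)) *ᵥ (q - g) ≤ 0 :=
    nonpos_of_mul_nonpos_right (by linarith [hτ (τ + 1) τ.le_succ, hmax τ g, hO g, hOM g g]) hc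
  by_contra hne
  have hpos := hpd.dotProduct_mulVec_pos (sub_ne_zero.2 hne)
  rw [star_trivial] at hpos
  exact hpos.not_ge hquad
end

section
/- The Gaussian kernel objective approaches a least-squares objective as h → ∞: for fixed data (x_i, y_i), i = 1,…,n, with O_h(θ) = (1/n) Σ_i (2π h^2)^{-1/2} e^{-(y_i-θᵀx_i)^2/(2h^2)}, we have lim_{h→∞} h^2 (√(2π) h · O_h(θ) - 1) = -(1/(2n)) Σ_i (y_i - θᵀx_i)^2 for every θ ∈ ℝ^p. -/
open Matrix Filter Real BigOperators

lemma aux_tendsto (a : ℝ) :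
    Tendsto (fun h : ℝ => h ^ 2 * (Real.exp (-a / (2 * h ^ 2)) - 1)) atTop
      (nhds (-a / 2)) := by
  rcases eq_or_ne a 0 with rfl | ha
  · have : (fun h : ℝ => h ^ 2 * (Real.exp (-0 / (2 * h ^ 2)) - 1))
        = fun _ : ℝ => (0 : ℝ) := by funext h; simp
    rw [this, show (-(0:ℝ) / 2) = 0 by norm_num]
    exact tendsto_const_nhds
  · have hslope : Tendsto (fun u : ℝ => (Real.exp u - 1) / u) (nhdsWithin 0 {0}ᶜ)
        (nhds 1) := by
      have h0 := hasDerivAt_exp (0 : ℝ)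
      rw [hasDerivAt_iff_tendsto_slope] at h0
      rw [Real.exp_zero] at h0
      exact h0.congr fun u => by simp [slope_def_field]
    have hu : Tendsto (fun h : ℝ => -a / (2 * h ^ 2)) atTop (nhdsWithin 0 {0}ᶜ) := by
      apply tendsto_nhdsWithin_of_tendsto_nhds_of_eventually_within
      · have h2 : Tendsto (fun h : ℝ => 2 * h ^ 2) atTop atTop :=
          (tendsto_pow_atTop (by norm_num)).const_mul_atTop (by norm_num)
        exact Tendsto.div_atTop
          (tendsto_const_nhds : Tendsto (fun _ : ℝ => -a) atTop (nhds (-a))) h2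
      · filter_upwards [eventually_gt_atTop (0 : ℝ)] with h hh
        have : (2 : ℝ) * h ^ 2 ≠ 0 := by positivity
        simp only [Set.mem_compl_iff, Set.mem_singleton_iff]
        exact div_ne_zero (neg_ne_zero.2 ha) this
    have key : Tendsto (fun h : ℝ =>
        (-a / 2) * ((Real.exp (-a / (2 * h ^ 2)) - 1) / (-a / (2 * h ^ 2))))
        atTop (nhds (-a / 2)) := by
      simpa using (hslope.comp hu).const_mul (-a / 2)
    refine key.congr' ?_
    filter_upwards [eventually_gt_atTop (0 : ℝ)] with h hh
    have h2 : (2 : ℝ) * h ^ 2 ≠ 0 := by positivity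
    field_simp

/-- The Gaussian-kernel MLR objective approaches a least-squares objective as `h → ∞`:
with `O_h(θ) = (1/n) Σ_i (2πh^2)^{-1/2} exp(-(y_i - θᵀx_i)^2/(2h^2))`, for every `θ`,
`h^2 (√(2π) h · O_h(θ) - 1) → -(1/(2n)) Σ_i (y_i - θᵀx_i)^2` as `h → ∞`. -/
theorem gaussian_mlr_tendsto_ols (p n : ℕ) (hn : 0 < n)
    (x : Fin n → Fin p → ℝ) (y : Fin n → ℝ) (θ : Fin p → ℝ) :
    Tendsto
      (fun h : ℝ => h ^ 2 *
        (Real.sqrt (2 * π) * h *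
          ((1 / n) * ∑ i, (Real.sqrt (2 * π * h ^ 2))⁻¹ *
            Real.exp (-(y i - θ ⬝ᵥ x i) ^ 2 / (2 * h ^ 2))) - 1))
      atTop
      (nhds (-(1 / (2 * n)) * ∑ i, (y i - θ ⬝ᵥ x i) ^ 2)) := by
  have hn' : (n : ℝ) ≠ 0 := Nat.cast_ne_zero.2 hn.ne'
  have hsum : Tendsto (fun h : ℝ =>
      (1 / n : ℝ) * ∑ i, h ^ 2 * (Real.exp (-(y i - θ ⬝ᵥ x i) ^ 2 / (2 * h ^ 2)) - 1))
      atTop (nhds ((1 / n : ℝ) * ∑ i, (-(y i - θ ⬝ᵥ x i) ^ 2 / 2))) :=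
    (tendsto_finset_sum _ (fun i _ => aux_tendsto ((y i - θ ⬝ᵥ x i) ^ 2))).const_mul _
  have heq : ((1 / n : ℝ) * ∑ i, (-(y i - θ ⬝ᵥ x i) ^ 2 / 2))
      = -(1 / (2 * n)) * ∑ i, (y i - θ ⬝ᵥ x i) ^ 2 := by
    rw [Finset.mul_sum, Finset.mul_sum]
    exact Finset.sum_congr rfl fun i _ => by ring
  rw [heq] at hsum
  refine hsum.congr' ?_
  filter_upwards [eventually_gt_atTop (0 : ℝ)] with h hh
  have hsq : Real.sqrt (2 * π * h ^ 2) = Real.sqrt (2 * π) * h := by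
    rw [Real.sqrt_mul (by positivity), Real.sqrt_sq hh.le]
  have hπ : (0:ℝ) < Real.sqrt (2 * π) := Real.sqrt_pos.2 (by positivity)
  have hne : Real.sqrt (2 * π) * h ≠ 0 := by positivity
  rw [hsq]
  have hmid : Real.sqrt (2 * π) * h *
      ((1 / n : ℝ) * ∑ i, (Real.sqrt (2 * π) * h)⁻¹ *
        Real.exp (-(y i - θ ⬝ᵥ x i) ^ 2 / (2 * h ^ 2)))
      = (1 / n : ℝ) * ∑ i, Real.exp (-(y i - θ ⬝ᵥ x i) ^ 2 / (2 * h ^ 2)) := by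
    rw [mul_left_comm]
    congr 1
    rw [Finset.mul_sum]
    exact Finset.sum_congr rfl fun i _ => by field_simp
  rw [hmid]
  have hS : ∑ i, h ^ 2 * (Real.exp (-(y i - θ ⬝ᵥ x i) ^ 2 / (2 * h ^ 2)) - 1)
      = h ^ 2 * (∑ i, Real.exp (-(y i - θ ⬝ᵥ x i) ^ 2 / (2 * h ^ 2))) - n * h ^ 2 := by
    simp [mul_sub, Finset.sum_sub_distrib, Finset.mul_sum, mul_comm]
  rw [hS]
  field_simp
end
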